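/- If β ∈ (β̄, μ_1) ∪ (μ_n, ∞), then (μ_j − β)·g(β) > 0 for every j, and the numbers α_j(β) := ((μ_j − β)·g(β))^{−1/2} are positive and satisfy the system (★): μ_j α_j(β)² + β·Σ_{k ≠ j} α_k(β)² = 1 for j = 1, …, n. -/

import Mathlib

/-!
Writing `a_k = ((μ_k - β) g(β))⁻¹`, the left side of the `j`-th equation is
`(μ_j - β) a_j + β ∑_k a_k = 1/g(β) + (g(β) - 1)/g(β) = 1`, so the system holds as soon as
`g(β) ≠ 0` and no `μ_k` equals `β`. Positivity of `(μ_j - β) g(β)`: below `μ_1` all `μ_k - β`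
are positive and `g` is strictly increasing there, so `g(β) > g(β̄) = 0`; above `μ_n` all
`μ_k - β` are negative and each term `β / (μ_k - β)` is below `-1`, so `g(β) < 1 - n < 0`.
-/

open Finset

variable {ι : Type*} [Fintype ι]

noncomputable def secularFn (μ : ι → ℝ) (β : ℝ) : ℝ :=
  1 + β * ∑ k, 1 / (μ k - β)

theorem secularFn_sub_secularFn {μ : ι → ℝ} {β β' : ℝ} (hβ : ∀ k, μ k ≠ β)
    (hβ' : ∀ k, μ k ≠ β') :
    secularFn μ β - secularFn μ β' = ∑ k, μ k * (β - β') / ((μ k - β) * (μ k - β')) := by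
  simp only [secularFn, mul_sum, add_sub_add_left_eq_sub, ← sum_sub_distrib]
  refine sum_congr rfl fun k _ => ?_
  have := sub_ne_zero.2 (hβ k)
  have := sub_ne_zero.2 (hβ' k)
  field_simp
  ring

theorem secularFn_lt_secularFn [Nonempty ι] {μ : ι → ℝ} (hμ : ∀ k, 0 < μ k) {β β' : ℝ}
    (hβ'β : β' < β) (hβ : ∀ k, β < μ k) : secularFn μ β' < secularFn μ β := by
  have hβ' : ∀ k, β' < μ k := fun k => hβ'β.trans (hβ k)
  rw [← sub_pos, secularFn_sub_secularFn (fun k => (hβ k).ne') (fun k => (hβ' k).ne')]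
  exact sum_pos (fun k _ => div_pos (mul_pos (hμ k) (sub_pos.2 hβ'β))
    (mul_pos (sub_pos.2 (hβ k)) (sub_pos.2 (hβ' k)))) univ_nonempty

theorem secularFn_lt_one_sub_card [Nonempty ι] {μ : ι → ℝ} (hμ : ∀ k, 0 < μ k) {β : ℝ}
    (hβ : ∀ k, μ k < β) : secularFn μ β < 1 - Fintype.card ι := by
  have hterm : ∀ k, β / (μ k - β) < -1 := fun k => by
    rw [div_lt_iff_of_neg (sub_neg.2 (hβ k))]
    linarith [hμ k]
  calc secularFn μ β = 1 + ∑ k, β / (μ k - β) := by simp only [secularFn, mul_sum, mul_one_div]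
    _ < 1 + ∑ _k : ι, (-1 : ℝ) :=
      add_lt_add_right (sum_lt_sum_of_nonempty univ_nonempty fun k _ => hterm k) 1
    _ = 1 - Fintype.card ι := by simp [sub_eq_add_neg]

theorem secularFn_inv_solves [DecidableEq ι] {μ : ι → ℝ} {β : ℝ} (hβ : ∀ k, μ k ≠ β)
    (hg : secularFn μ β ≠ 0) (j : ι) :
    μ j * ((μ j - β) * secularFn μ β)⁻¹ +
      β * ∑ k ∈ univ.erase j, ((μ k - β) * secularFn μ β)⁻¹ = 1 := by
  have hβj := sub_ne_zero.2 (hβ j)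
  have hsum : β * ∑ k, ((μ k - β) * secularFn μ β)⁻¹ = (secularFn μ β - 1) / secularFn μ β := by
    simp only [mul_inv, ← sum_mul, secularFn, one_div]
    ring
  rw [sum_erase_eq_sub (mem_univ j), mul_sub, hsum]
  field_simp
  ring

theorem Real.rpow_neg_one_half_sq {x : ℝ} (hx : 0 ≤ x) : (x ^ (-(1 / 2) : ℝ)) ^ 2 = x⁻¹ := by
  rw [← Real.rpow_natCast, ← Real.rpow_mul hx]
  norm_num [Real.rpow_neg_one]

/-- If `β ∈ (β̄, μ 0) ∪ (μ (n-1), ∞)` then `(μ_j - β) g(β) > 0` for every `j`,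
and the numbers `α_j(β) = ((μ_j - β) g(β))^(-1/2)` are positive and solve the
system `μ_j α_j² + β ∑_{k ≠ j} α_k² = 1`. -/
theorem stmt_4 (n : ℕ) (hn : 2 ≤ n) (μ : Fin n → ℝ) (hμpos : ∀ k, 0 < μ k)
    (hμmono : Monotone μ) (g : ℝ → ℝ)
    (hg : ∀ β : ℝ, g β = 1 + β * ∑ k, 1 / (μ k - β))
    (βbar : ℝ) (hβbarzero : g βbar = 0)
    (β : ℝ)
    (hβ : β ∈ Set.Ioo βbar (μ ⟨0, by omega⟩) ∪ Set.Ioi (μ ⟨n - 1, by omega⟩))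
    (α : Fin n → ℝ) (hα : ∀ j, α j = ((μ j - β) * g β) ^ (-(1 / 2) : ℝ)) :
    (∀ j, 0 < (μ j - β) * g β) ∧
    (∀ j, 0 < α j) ∧
    (∀ j, μ j * α j ^ 2 + β * ∑ k ∈ Finset.univ.erase j, α k ^ 2 = 1) := by
  obtain rfl : g = secularFn μ := funext hg
  have : Nonempty (Fin n) := ⟨⟨0, by omega⟩⟩
  have hprod : ∀ j, 0 < (μ j - β) * secularFn μ β := by
    rcases hβ with ⟨hβbar, hβ0⟩ | hβn
    · have hβ : ∀ k, β < μ k := fun k => hβ0.trans_le (hμmono (Fin.mk_le_of_le_val (Nat.zero_le _)))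
      have hg : 0 < secularFn μ β := hβbarzero ▸ secularFn_lt_secularFn hμpos hβbar hβ
      exact fun j => mul_pos (sub_pos.2 (hβ j)) hg
    · have hβ : ∀ k, μ k < β := fun k =>
        (hμmono (Fin.le_def.2 (Nat.le_sub_one_of_lt k.isLt))).trans_lt hβn
      have hg : secularFn μ β < 0 := by
        have hcard : (1 : ℝ) ≤ Fintype.card (Fin n) := Nat.one_le_cast.2 Fintype.card_pos
        linarith [secularFn_lt_one_sub_card hμpos hβ]
      exact fun j => mul_pos_of_neg_of_neg (sub_neg.2 (hβ j)) hg
  have hsq : ∀ k, α k ^ 2 = ((μ k - β) * secularFn μ β)⁻¹ := fun k => by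
    rw [hα, Real.rpow_neg_one_half_sq (hprod k).le]
  refine ⟨hprod, fun j => hα j ▸ Real.rpow_pos_of_pos (hprod j) _, fun j => ?_⟩
  simp only [hsq]
  exact secularFn_inv_solves (fun k h => (hprod k).ne' (by rw [h, sub_self, zero_mul]))
    (right_ne_zero_of_mul (hprod j).ne') j
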